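/- arXiv:math/0607651 — 3 statements merged into one kernel-verified Lean document; each statement's English description precedes it below -/
import Mathlib

section
/- Suppose (xₙ*) is a sequence in the unit ball of E*, (xₙ) is a weakly unconditionally Cauchy sequence in E with xₙ*(xₙ) = 1 for all n, and there exist x** ∈ E** and ε > 0 with x**(xₙ*) > ε for all n. If F contains an isomorphic copy of ℓ¹, witnessed by a sequence (yₙ) with M₁ Σ|aₙ| ≤ ‖Σ aₙ yₙ‖ ≤ M₂ Σ|aₙ|, then the sequence (xₙ* ⊗ yₙ) in Π₁(E,F) is equivalent to the standard unit vector basis of ℓ¹, i.e., there exist constants c, C > 0 with c Σₙ₌₁^m |aₙ| ≤ π₁(Σₙ₌₁^m aₙ xₙ* ⊗ yₙ) ≤ C Σₙ₌₁^m |aₙ| for all scalars a₁,…,a_m. -/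
open Filter MeasureTheory
open scoped Topology

/-- `ρ` is a 1-summing bound for `T`: for every finite family `x₁,…,xₙ` in `E`,
`∑ ‖T xᵢ‖ ≤ ρ * sup_{‖f‖ ≤ 1} ∑ |f xᵢ|`. -/
def Pi1Bound {E F : Type*} [NormedAddCommGroup E] [NormedSpace ℝ E]
    [NormedAddCommGroup F] [NormedSpace ℝ F] (T : E →L[ℝ] F) (ρ : ℝ) : Prop :=
  ∀ (n : ℕ) (x : Fin n → E),
    ∑ i, ‖T (x i)‖ ≤ ρ * ⨆ f : {f : E →L[ℝ] ℝ // ‖f‖ ≤ 1}, ∑ i, |f.1 (x i)|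

/-- `T` is absolutely 1-summing. -/
def IsAbs1Summing {E F : Type*} [NormedAddCommGroup E] [NormedSpace ℝ E]
    [NormedAddCommGroup F] [NormedSpace ℝ F] (T : E →L[ℝ] F) : Prop :=
  ∃ ρ, 0 < ρ ∧ Pi1Bound T ρ

/-- The 1-summing norm `π₁(T)`. -/
noncomputable def pi1 {E F : Type*} [NormedAddCommGroup E] [NormedSpace ℝ E]
    [NormedAddCommGroup F] [NormedSpace ℝ F] (T : E →L[ℝ] F) : ℝ :=
  sInf {ρ | 0 < ρ ∧ Pi1Bound T ρ}

lemma wuc_bound {E : Type*} [NormedAddCommGroup E] [NormedSpace ℝ E]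
    (x : ℕ → E) (hwuc : ∀ f : E →L[ℝ] ℝ, Summable fun n => |f (x n)|) :
    ∃ K : ℝ, 1 ≤ K ∧ ∀ (m : ℕ) (f : E →L[ℝ] ℝ), ‖f‖ ≤ 1 →
      ∑ j : Fin m, |f (x j)| ≤ K := by
  set ι := Σ m : ℕ, {σ : Fin m → ℝ // ∀ i, |σ i| ≤ 1} with hι
  set g : ι → (E →L[ℝ] ℝ) →L[ℝ] ℝ := fun p =>
    NormedSpace.inclusionInDoubleDual ℝ E (∑ i, p.2.1 i • x i) with hg
  have hpt : ∀ f : E →L[ℝ] ℝ, ∃ C, ∀ p : ι, ‖g p f‖ ≤ C := by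
    intro f
    refine ⟨∑' n, |f (x n)|, fun p => ?_⟩
    have h1 : g p f = ∑ i, p.2.1 i * f (x (i : ℕ)) := by
      simp [hg, NormedSpace.dual_def, map_sum]
    calc ‖g p f‖ = |∑ i, p.2.1 i * f (x (i : ℕ))| := by rw [h1]; rfl
      _ ≤ ∑ i, |p.2.1 i * f (x (i : ℕ))| := Finset.abs_sum_le_sum_abs _ _
      _ ≤ ∑ i : Fin p.1, |f (x (i : ℕ))| := by
          refine Finset.sum_le_sum fun i _ => ?_
          rw [abs_mul]
          exact mul_le_of_le_one_left (abs_nonneg _) (p.2.2 i)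
      _ = ∑ i ∈ Finset.range p.1, |f (x i)| := Fin.sum_univ_eq_sum_range (fun i => |f (x i)|) p.1
      _ ≤ ∑' n, |f (x n)| :=
          Summable.sum_le_tsum _ (fun i _ => abs_nonneg _) (hwuc f)
  obtain ⟨C', hC'⟩ := banach_steinhaus hpt
  refine ⟨max C' 1, le_max_right _ _, fun m f hf => ?_⟩
  set σ : Fin m → ℝ := fun i => if 0 ≤ f (x (i : ℕ)) then 1 else -1 with hσ
  have hσ1 : ∀ i, |σ i| ≤ 1 := by
    intro i; simp only [hσ]; split <;> simp
  set p : ι := ⟨m, σ, hσ1⟩ with hp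
  have h1 : g p f = ∑ i : Fin m, σ i * f (x (i : ℕ)) := by
    simp [hg, hp, NormedSpace.dual_def, map_sum]
  have h2 : ∀ i : Fin m, σ i * f (x (i : ℕ)) = |f (x (i : ℕ))| := by
    intro i
    simp only [hσ]
    rcases le_or_gt 0 (f (x (i : ℕ))) with h | h
    · rw [if_pos h, one_mul, abs_of_nonneg h]
    · rw [if_neg (not_le.2 h), abs_of_neg h]; ring
  calc ∑ j : Fin m, |f (x j)| = g p f := by rw [h1]; exact (Finset.sum_congr rfl fun i _ => (h2 i)).symm
    _ ≤ ‖g p f‖ := le_abs_self _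
    _ ≤ ‖g p‖ * ‖f‖ := (g p).le_opNorm f
    _ ≤ C' * 1 := mul_le_mul (hC' p) hf (norm_nonneg _)
        ((norm_nonneg (g p)).trans (hC' p))
    _ ≤ max C' 1 := by rw [mul_one]; exact le_max_left _ _

theorem stmt3 {E F : Type*} [NormedAddCommGroup E] [NormedSpace ℝ E] [CompleteSpace E]
    [NormedAddCommGroup F] [NormedSpace ℝ F] [CompleteSpace F]
    (xs : ℕ → E →L[ℝ] ℝ) (x : ℕ → E) (hxs : ∀ n, ‖xs n‖ ≤ 1)
    (hwuc : ∀ f : E →L[ℝ] ℝ, Summable fun n => |f (x n)|)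
    (hbi : ∀ n, xs n (x n) = 1)
    (xss : (E →L[ℝ] ℝ) →L[ℝ] ℝ) (ε : ℝ) (hε : 0 < ε) (hlow : ∀ n, ε < xss (xs n))
    (y : ℕ → F) (M₁ M₂ : ℝ) (hM₁ : 0 < M₁) (hM₂ : 0 < M₂)
    (hy : ∀ (m : ℕ) (a : Fin m → ℝ),
      M₁ * ∑ i, |a i| ≤ ‖∑ i, a i • y i‖ ∧ ‖∑ i, a i • y i‖ ≤ M₂ * ∑ i, |a i|) :
    ∃ c > (0 : ℝ), ∃ C > (0 : ℝ), ∀ (m : ℕ) (a : Fin m → ℝ),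
      c * ∑ i, |a i| ≤ pi1 (∑ i, a i • (xs i).smulRight (y i)) ∧
      pi1 (∑ i, a i • (xs i).smulRight (y i)) ≤ C * ∑ i, |a i| := by
  obtain ⟨K, hK1, hK⟩ := wuc_bound x hwuc
  have hK0 : (0:ℝ) < K := lt_of_lt_of_le one_pos hK1
  refine ⟨M₁ / K, div_pos hM₁ hK0, M₂, hM₂, fun m a => ?_⟩
  set T : E →L[ℝ] F := ∑ i, a i • (xs i).smulRight (y i) with hT
  have hTapp : ∀ z : E, T z = ∑ i : Fin m, (a i * xs i z) • y i := by
    intro z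
    simp [hT, ContinuousLinearMap.sum_apply, ContinuousLinearMap.smul_apply,
      ContinuousLinearMap.smulRight_apply, smul_smul]
  set S := ∑ i : Fin m, |a i| with hS
  have hS0 : 0 ≤ S := Finset.sum_nonneg fun i _ => abs_nonneg _
  rcases eq_or_lt_of_le hS0 with hS0' | hS0'
  · -- all coefficients vanish
    have ha : ∀ i : Fin m, a i = 0 := by
      intro i
      have := (Finset.sum_eq_zero_iff_of_nonneg fun i _ => abs_nonneg (a i)).1
        hS0'.symm i (Finset.mem_univ i)
      exact abs_eq_zero.1 this
    have hT0 : T = 0 := by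
      rw [hT]
      exact Finset.sum_eq_zero fun i _ => by rw [ha i, zero_smul]
    have hpi : pi1 T = 0 := by
      rw [hT0]
      unfold pi1
      have hset : {ρ : ℝ | 0 < ρ ∧ Pi1Bound (0 : E →L[ℝ] F) ρ} = Set.Ioi 0 := by
        ext ρ
        simp only [Set.mem_setOf_eq, Set.mem_Ioi]
        refine ⟨fun h => h.1, fun hρ => ⟨hρ, fun n z => ?_⟩⟩
        simp only [ContinuousLinearMap.zero_apply, norm_zero, Finset.sum_const_zero]
        exact mul_nonneg hρ.le
          (Real.iSup_nonneg fun f => Finset.sum_nonneg fun i _ => abs_nonneg _)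
      rw [hset, csInf_Ioi]
    rw [hpi, ← hS0']
    simp
  · have hmem : Pi1Bound T (M₂ * S) := by
      intro n z
      set Sup := ⨆ f : {f : E →L[ℝ] ℝ // ‖f‖ ≤ 1}, ∑ j : Fin n, |f.1 (z j)| with hSup
      have hbdd : BddAbove (Set.range fun f : {f : E →L[ℝ] ℝ // ‖f‖ ≤ 1} =>
          ∑ j : Fin n, |f.1 (z j)|) := by
        refine ⟨∑ j : Fin n, ‖z j‖, ?_⟩
        rintro _ ⟨f, rfl⟩
        refine Finset.sum_le_sum fun j _ => ?_
        calc |f.1 (z j)| ≤ ‖f.1‖ * ‖z j‖ := f.1.le_opNorm (z j)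
          _ ≤ 1 * ‖z j‖ := mul_le_mul_of_nonneg_right f.2 (norm_nonneg _)
          _ = ‖z j‖ := one_mul _
      have hxsle : ∀ i : Fin m, ∑ j : Fin n, |xs i (z j)| ≤ Sup := fun i =>
        le_ciSup hbdd ⟨xs i, hxs i⟩
      have hSupnn : 0 ≤ Sup :=
        Real.iSup_nonneg fun f => Finset.sum_nonneg fun j _ => abs_nonneg _
      calc ∑ j, ‖T (z j)‖ ≤ ∑ j : Fin n, M₂ * ∑ i : Fin m, |a i * xs i (z j)| := by
            refine Finset.sum_le_sum fun j _ => ?_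
            rw [hTapp]
            exact (hy m fun i => a i * xs i (z j)).2
        _ = M₂ * ∑ i : Fin m, |a i| * ∑ j : Fin n, |xs i (z j)| := by
            rw [← Finset.mul_sum, Finset.sum_comm]
            congr 1
            refine Finset.sum_congr rfl fun i _ => ?_
            rw [Finset.mul_sum]
            exact Finset.sum_congr rfl fun j _ => abs_mul _ _
        _ ≤ M₂ * ∑ i : Fin m, |a i| * Sup := by
            refine mul_le_mul_of_nonneg_left (Finset.sum_le_sum fun i _ => ?_) hM₂.le
            exact mul_le_mul_of_nonneg_left (hxsle i) (abs_nonneg _)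
        _ = M₂ * S * Sup := by rw [← Finset.sum_mul, mul_assoc]
    have hmem' : M₂ * S ∈ {ρ : ℝ | 0 < ρ ∧ Pi1Bound T ρ} := ⟨mul_pos hM₂ hS0', hmem⟩
    constructor
    · refine le_csInf ⟨M₂ * S, hmem'⟩ ?_
      rintro ρ ⟨hρ0, hρ⟩
      have h1 := hρ m (fun j : Fin m => x j)
      have hlo : M₁ * S ≤ ∑ j : Fin m, ‖T (x j)‖ := by
        rw [hS, Finset.mul_sum]
        refine Finset.sum_le_sum fun j _ => ?_
        have h2 : |a j| ≤ ∑ i : Fin m, |a i * xs i (x (j : ℕ))| := by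
          have h3 : |a j * xs j (x (j : ℕ))| = |a j| := by
            rw [hbi (j : ℕ), mul_one]
          rw [← h3]
          exact Finset.single_le_sum (f := fun i => |a i * xs i (x (j : ℕ))|) (fun i _ => abs_nonneg _) (Finset.mem_univ j)
        calc M₁ * |a j| ≤ M₁ * ∑ i : Fin m, |a i * xs i (x (j : ℕ))| :=
              mul_le_mul_of_nonneg_left h2 hM₁.le
          _ ≤ ‖T (x (j : ℕ))‖ := by rw [hTapp]; exact (hy m _).1
      have hsup : (⨆ f : {f : E →L[ℝ] ℝ // ‖f‖ ≤ 1},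
          ∑ j : Fin m, |f.1 (x (j : ℕ))|) ≤ K :=
        Real.iSup_le (fun f => hK m f.1 f.2) hK0.le
      have h4 : M₁ * S ≤ ρ * K :=
        hlo.trans (h1.trans (mul_le_mul_of_nonneg_left hsup hρ0.le))
      rw [div_mul_eq_mul_div, div_le_iff₀ hK0]
      linarith
    · exact csInf_le ⟨0, fun ρ hρ => hρ.1.le⟩ hmem'
end

section
/- If F contains an asymptotically isometric copy of ℓ¹ — i.e., there is a sequence (yₙ) in F and a null sequence (εₙ) of positive reals with Σₙ (1−εₙ)|aₙ| ≤ ‖Σₙ aₙ yₙ‖ ≤ Σₙ |aₙ| for all (aₙ) ∈ ℓ¹ — and there exist x₀ ∈ E, x₀* ∈ E* of norm one with x₀*(x₀) = 1, then the space Π₁(E,F) of absolutely 1-summing operators contains an asymptotically isometric copy of ℓ¹: the sequence Tₙ = x₀* ⊗ yₙ satisfies Σₙ (1−εₙ)|aₙ| ≤ π₁(Σₙ aₙ Tₙ) ≤ Σₙ |aₙ| for all (aₙ) ∈ ℓ¹. -/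
open Filter MeasureTheory
open scoped Topology

lemma pi1_smulRight_eq {E F : Type*} [NormedAddCommGroup E] [NormedSpace ℝ E]
    [NormedAddCommGroup F] [NormedSpace ℝ F]
    (x₀ : E) (x₀s : E →L[ℝ] ℝ) (hx₀ : ‖x₀‖ = 1) (hx₀s : ‖x₀s‖ = 1) (hdual : x₀s x₀ = 1)
    (v : F) : pi1 (x₀s.smulRight v) = ‖v‖ := by
  haveI : Nonempty {f : E →L[ℝ] ℝ // ‖f‖ ≤ 1} := ⟨⟨0, by simp⟩⟩
  have hbound : ∀ ρ : ℝ, ‖v‖ ≤ ρ → Pi1Bound (x₀s.smulRight v) ρ := by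
    intro ρ hρ n x
    have hbdd : BddAbove (Set.range fun f : {f : E →L[ℝ] ℝ // ‖f‖ ≤ 1} =>
        ∑ i, |f.1 (x i)|) := by
      refine ⟨∑ i, ‖x i‖, ?_⟩
      rintro _ ⟨f, rfl⟩
      refine Finset.sum_le_sum fun i _ => ?_
      calc |f.1 (x i)| = ‖f.1 (x i)‖ := (Real.norm_eq_abs _).symm
        _ ≤ ‖f.1‖ * ‖x i‖ := f.1.le_opNorm _
        _ ≤ 1 * ‖x i‖ := by gcongr; exact f.2
        _ = ‖x i‖ := one_mul _
    have hle : ∑ i, |x₀s (x i)| ≤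
        ⨆ f : {f : E →L[ℝ] ℝ // ‖f‖ ≤ 1}, ∑ i, |f.1 (x i)| :=
      le_ciSup hbdd ⟨x₀s, hx₀s.le⟩
    have hsum0 : (0:ℝ) ≤ ∑ i, |x₀s (x i)| :=
      Finset.sum_nonneg fun i _ => abs_nonneg _
    calc ∑ i, ‖(x₀s.smulRight v) (x i)‖ = ∑ i, |x₀s (x i)| * ‖v‖ := by
          refine Finset.sum_congr rfl fun i _ => ?_
          simp [norm_smul, Real.norm_eq_abs]
      _ = (∑ i, |x₀s (x i)|) * ‖v‖ := (Finset.sum_mul _ _ _).symm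
      _ ≤ (⨆ f : {f : E →L[ℝ] ℝ // ‖f‖ ≤ 1}, ∑ i, |f.1 (x i)|) * ‖v‖ := by
          gcongr
      _ ≤ (⨆ f : {f : E →L[ℝ] ℝ // ‖f‖ ≤ 1}, ∑ i, |f.1 (x i)|) * ρ := by
          gcongr
          exact le_trans hsum0 hle
      _ = ρ * ⨆ f : {f : E →L[ℝ] ℝ // ‖f‖ ≤ 1}, ∑ i, |f.1 (x i)| := mul_comm _ _
  have hmem : ∀ t : ℝ, 0 < t → ‖v‖ + t ∈ {ρ | 0 < ρ ∧ Pi1Bound (x₀s.smulRight v) ρ} := by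
    intro t ht
    exact ⟨by positivity, hbound _ (by linarith)⟩
  have hlow : ∀ ρ ∈ {ρ | 0 < ρ ∧ Pi1Bound (x₀s.smulRight v) ρ}, ‖v‖ ≤ ρ := by
    rintro ρ ⟨hρ0, hb⟩
    have h := hb 1 ![x₀]
    have hsup : (⨆ f : {f : E →L[ℝ] ℝ // ‖f‖ ≤ 1}, ∑ i : Fin 1, |f.1 (![x₀] i)|) ≤ 1 := by
      refine ciSup_le fun f => ?_
      simp only [Fin.sum_univ_one, Matrix.cons_val_zero]
      calc |f.1 x₀| = ‖f.1 x₀‖ := (Real.norm_eq_abs _).symm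
        _ ≤ ‖f.1‖ * ‖x₀‖ := f.1.le_opNorm _
        _ ≤ 1 * 1 := by rw [hx₀]; exact mul_le_mul_of_nonneg_right f.2 zero_le_one
        _ = 1 := one_mul _
    have h1 : ∑ i : Fin 1, ‖(x₀s.smulRight v) (![x₀] i)‖ = ‖v‖ := by
      simp [hdual, norm_smul]
    calc ‖v‖ ≤ ρ * ⨆ f : {f : E →L[ℝ] ℝ // ‖f‖ ≤ 1}, ∑ i : Fin 1, |f.1 (![x₀] i)| :=
          h1 ▸ h
      _ ≤ ρ * 1 := mul_le_mul_of_nonneg_left hsup hρ0.le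
      _ = ρ := mul_one _
  refine le_antisymm ?_ (le_csInf ⟨‖v‖ + 1, hmem 1 one_pos⟩ hlow)
  refine le_of_forall_pos_le_add fun t ht => ?_
  exact csInf_le ⟨0, fun ρ hρ => hρ.1.le⟩ (hmem t ht)

theorem stmt4 {E F : Type*} [NormedAddCommGroup E] [NormedSpace ℝ E] [CompleteSpace E]
    [NormedAddCommGroup F] [NormedSpace ℝ F] [CompleteSpace F]
    (y : ℕ → F) (ε : ℕ → ℝ) (hεpos : ∀ n, 0 < ε n)
    (hεnull : Filter.Tendsto ε Filter.atTop (nhds 0))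
    (hy : ∀ a : ℕ → ℝ, Summable (fun n => |a n|) →
      ∑' n, (1 - ε n) * |a n| ≤ ‖∑' n, a n • y n‖ ∧ ‖∑' n, a n • y n‖ ≤ ∑' n, |a n|)
    (x₀ : E) (x₀s : E →L[ℝ] ℝ) (hx₀ : ‖x₀‖ = 1) (hx₀s : ‖x₀s‖ = 1) (hdual : x₀s x₀ = 1) :
    ∀ a : ℕ → ℝ, Summable (fun n => |a n|) →
      (∑' n, (1 - ε n) * |a n| ≤ pi1 (∑' n, a n • x₀s.smulRight (y n)) ∧
        pi1 (∑' n, a n • x₀s.smulRight (y n)) ≤ ∑' n, |a n|) := by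
  intro a ha
  have hy1 : ∀ n, ‖y n‖ ≤ 1 := by
    intro n
    have hsum : Summable (fun m => |if m = n then (1:ℝ) else 0|) := by
      apply summable_of_ne_finset_zero (s := {n})
      intro m hm
      simp only [Finset.mem_singleton] at hm
      simp [hm]
    have h := (hy (fun m => if m = n then 1 else 0) hsum).2
    have h1 : ∑' m, (if m = n then (1:ℝ) else 0) • y m = y n := by
      rw [tsum_eq_single n (fun m hm => by simp [hm])]
      simp
    have h2 : ∑' m, |if m = n then (1:ℝ) else 0| = 1 := by
      rw [tsum_eq_single n (fun m hm => by simp [hm])]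
      simp
    rw [h1, h2] at h
    exact h
  have hS : Summable (fun n => a n • y n) := by
    refine Summable.of_norm (ha.of_nonneg_of_le (fun n => norm_nonneg _) fun n => ?_)
    calc ‖a n • y n‖ = |a n| * ‖y n‖ := by rw [norm_smul, Real.norm_eq_abs]
      _ ≤ |a n| * 1 := mul_le_mul_of_nonneg_left (hy1 n) (abs_nonneg _)
      _ = |a n| := mul_one _
  have hT : ∑' n, a n • x₀s.smulRight (y n) =
      x₀s.smulRight (∑' n, a n • y n) := by
    have := (ContinuousLinearMap.smulRightL ℝ E F x₀s).map_tsum hS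
    simpa using this.symm
  rw [hT, pi1_smulRight_eq x₀ x₀s hx₀ hx₀s hdual]
  exact hy a ha
end

section
/- Let (Tₙ) be a sequence in L(E,F) equivalent to the standard unit vector basis of c₀, i.e., C₁ supₙ|aₙ| ≤ ‖Σₙ aₙ Tₙ‖ ≤ C₂ supₙ|aₙ| for all finitely supported scalars (aₙ). Suppose there exists x₀ ∈ E such that (Tₙ x₀) is a basic sequence in F whose coefficient functionals (yₙ*) are uniformly bounded by M. Then (Tₙ x₀) is also equivalent to the unit vector basis of c₀ in F; in particular F contains an isomorphic copy of c₀. -/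
open Filter MeasureTheory
open scoped Topology

theorem stmt5 {E F : Type*} [NormedAddCommGroup E] [NormedSpace ℝ E] [CompleteSpace E]
    [NormedAddCommGroup F] [NormedSpace ℝ F] [CompleteSpace F]
    (T : ℕ → E →L[ℝ] F) (C₁ C₂ : ℝ) (hC₁ : 0 < C₁) (hC₂ : 0 < C₂)
    (hT : ∀ (m : ℕ) (a : Fin m → ℝ),
      C₁ * (⨆ i, |a i|) ≤ ‖∑ i, a i • T i‖ ∧ ‖∑ i, a i • T i‖ ≤ C₂ * ⨆ i, |a i|)
    (x₀ : E) (ys : ℕ → F →L[ℝ] ℝ) (M : ℝ) (hM : 0 < M)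
    (hysbdd : ∀ n, ‖ys n‖ ≤ M)
    (hbi : ∀ n m, ys n (T m x₀) = if n = m then (1 : ℝ) else 0) :
    ∃ c > (0 : ℝ), ∃ C > (0 : ℝ), ∀ (m : ℕ) (a : Fin m → ℝ),
      c * (⨆ i, |a i|) ≤ ‖∑ i, a i • T i x₀‖ ∧ ‖∑ i, a i • T i x₀‖ ≤ C * ⨆ i, |a i| := by

  have hx₀ : x₀ ≠ 0 := by
    intro h
    have := hbi 0 0
    simp [h] at this
  have hx0pos : 0 < ‖x₀‖ := norm_pos_iff.mpr hx₀
  refine ⟨1 / M, by positivity, C₂ * ‖x₀‖ + 1, by positivity, fun m a => ?_⟩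
  set S := ∑ i, a i • T i x₀ with hS
  have hsupnn : 0 ≤ ⨆ i, |a i| := by
    rcases Nat.eq_zero_or_pos m with hm | hm
    · subst hm; simp [Real.iSup_of_isEmpty]
    · have : Nonempty (Fin m) := ⟨⟨0, hm⟩⟩
      exact le_ciSup_of_le (Set.Finite.bddAbove (Set.finite_range _)) this.some
        (abs_nonneg _)
  have happ : S = (∑ i, a i • T i) x₀ := by
    simp [hS, ContinuousLinearMap.sum_apply]
  constructor
  · -- lower bound
    rcases Nat.eq_zero_or_pos m with hm | hm
    · subst hm; simp [Real.iSup_of_isEmpty]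
    have : Nonempty (Fin m) := ⟨⟨0, hm⟩⟩
    rw [div_mul_eq_mul_div, div_le_iff₀ hM, mul_comm ‖S‖ M, one_mul]
    refine ciSup_le fun i => ?_
    have hai : ys i S = a i := by
      rw [hS, map_sum, Finset.sum_eq_single i]
      · simp [hbi]
      · intro j _ hj
        have hne : (i : ℕ) ≠ (j : ℕ) := fun h => hj (Fin.ext h.symm)
        simp [hbi, hne]
      · simp
    calc |a i| = |ys i S| := by rw [hai]
    _ ≤ ‖ys i‖ * ‖S‖ := (ys i).le_opNorm S
    _ ≤ M * ‖S‖ := by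
        apply mul_le_mul_of_nonneg_right (hysbdd i) (norm_nonneg _)
  · -- upper bound
    calc ‖S‖ = ‖(∑ i, a i • T i) x₀‖ := by rw [happ]
    _ ≤ ‖∑ i, a i • T i‖ * ‖x₀‖ := ContinuousLinearMap.le_opNorm _ _
    _ ≤ (C₂ * ⨆ i, |a i|) * ‖x₀‖ := by
        exact mul_le_mul_of_nonneg_right (hT m a).2 (norm_nonneg _)
    _ ≤ (C₂ * ‖x₀‖ + 1) * ⨆ i, |a i| := by
        nlinarith [hsupnn, hx0pos]
end
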